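/- arXiv:1604.03617 — 2 statements merged into one kernel-verified Lean document; each statement's English description precedes it below -/
import Mathlib

section
/- Let α ∈ 𝔽_q* and 1 ≤ k ≤ n. For i = 1, 2, let P_i ∈ 𝔽_q^k be a row vector, let T_i be an invertible k×k matrix over 𝔽_q, set τ_i(v) = (θ(v_0), ..., θ(v_{k−1}))·T_i, assume τ_i^n(P_i) = α·P_i, let C_i be the code defined by (τ_i, P_i, n), and assume dim C_i = n − k (so that each C_i is a skew (α,θ)-cyclic [n, n−k]-code defined by (τ_i, P_i, n)). Then C_1 = C_2 if and only if there exists an invertible k×k matrix S over 𝔽_q such that P_1·S = P_2 and τ_2(v) = τ_1(v·S^{−1})·S for all v ∈ 𝔽_q^k (i.e., τ_1 = S·τ_2·S^{−1}). -/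
/-- The θ-semilinear map `τ(v) = (θ(v_0), …, θ(v_{k-1}))·T` attached to a
matrix `T`. -/
def tauMap {k : ℕ} {F : Type*} [Field F] (θ : F ≃+* F)
    (T : Matrix (Fin k) (Fin k) F) : (Fin k → F) → (Fin k → F) :=
  fun v => Matrix.vecMul (fun i => θ (v i)) T

/-! The code defined by `(τ, P, n)` is the kernel of the parity-check map `c ↦ ∑ cᵢ τⁱ(P)`,
which is onto `𝔽_q^k` exactly when the code has dimension `n - k`. Two surjections with the
same kernel differ by a linear automorphism `g` of `𝔽_q^k`, and `g` sends `τ₁ⁱ(P₁)` to `τ₂ⁱ(P₂)`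
for `i < n`; thanks to `τᵢⁿ(Pᵢ) = α Pᵢ` this persists to `i = n`, so the two `θ`-semilinear maps
`g ∘ τ₁` and `τ₂ ∘ g` agree on the spanning vectors `τ₁ⁱ(P₁)` and hence everywhere. Conversely,
such a `g` carries one parity-check map to the other. Writing `g v = v S` gives the matrix form. -/

open Module

def tauSemilinear {k : ℕ} {F : Type*} [Field F] (θ : F ≃+* F) (T : Matrix (Fin k) (Fin k) F) :
    (Fin k → F) →ₛₗ[(θ : F →+* F)] Fin k → F where
  toFun := tauMap θ T
  map_add' u v := by
    simp only [tauMap, Pi.add_apply, map_add]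
    exact Matrix.add_vecMul _ _ _
  map_smul' a v := by
    simp only [tauMap, Pi.smul_apply, smul_eq_mul, map_mul]
    exact Matrix.smul_vecMul (θ a) _ _

section ParityCheck

variable (K : Type*) {V W : Type*} [Field K] [AddCommGroup V] [Module K V]
  [AddCommGroup W] [Module K W]

def parityCheck (f : V → V) (P : V) (n : ℕ) : (Fin n → K) →ₗ[K] V :=
  Fintype.linearCombination K fun i : Fin n => f^[i] P

variable {K}

theorem parityCheck_apply (f : V → V) (P : V) (n : ℕ) (c : Fin n → K) :
    parityCheck K f P n c = ∑ i, c i • f^[i] P :=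
  rfl

@[simp]
theorem parityCheck_apply_single (f : V → V) (P : V) {n : ℕ} (i : Fin n) :
    parityCheck K f P n (Pi.single i 1) = f^[i] P := by
  simp [parityCheck]

theorem LinearMap.comp_parityCheck {f₁ : V → V} {f₂ : W → W} {P₁ : V} {P₂ : W} (n : ℕ)
    (g : V →ₗ[K] W) (hP : g P₁ = P₂) (hg : Function.Semiconj g f₁ f₂) :
    g ∘ₗ parityCheck K f₁ P₁ n = parityCheck K f₂ P₂ n := by
  ext c
  simp [parityCheck_apply, hg.iterate_right _ _, hP]

end ParityCheck

theorem exists_linearEquiv_comp_eq_of_ker_eq {R M V W : Type*} [Ring R] [AddCommGroup M]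
    [Module R M] [AddCommGroup V] [Module R V] [AddCommGroup W] [Module R W]
    {f₁ : M →ₗ[R] V} {f₂ : M →ₗ[R] W} (hf₁ : Function.Surjective f₁)
    (hf₂ : Function.Surjective f₂) (hker : LinearMap.ker f₁ = LinearMap.ker f₂) :
    ∃ g : V ≃ₗ[R] W, g.toLinearMap ∘ₗ f₁ = f₂ :=
  ⟨(f₁.quotKerEquivOfSurjective hf₁).symm ≪≫ₗ Submodule.quotEquivOfEq _ _ hker ≪≫ₗ
      f₂.quotKerEquivOfSurjective hf₂, by
    ext c
    simp⟩

theorem LinearMap.surjective_of_finrank_ker_eq {K V W : Type*} [Field K] [AddCommGroup V]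
    [Module K V] [AddCommGroup W] [Module K W] [FiniteDimensional K V] [FiniteDimensional K W]
    (f : V →ₗ[K] W) (hle : finrank K W ≤ finrank K V)
    (hker : finrank K (LinearMap.ker f) = finrank K V - finrank K W) :
    Function.Surjective f := by
  have hrank := f.finrank_range_add_finrank_ker
  rw [← LinearMap.range_eq_top]
  exact Submodule.eq_top_of_finrank_eq (by omega)

section Semilinear

variable {K V W : Type*} [Field K] [AddCommGroup V] [Module K V] [AddCommGroup W] [Module K W]
  {σ : K →+* K} {τ₁ : V →ₛₗ[σ] V} {τ₂ : W →ₛₗ[σ] W} {P₁ : V} {P₂ : W} {n : ℕ} {c : K}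

theorem semiconj_of_map_iterate_eq (g : V →ₗ[K] W)
    (hspan : Submodule.span K (Set.range fun i : Fin n => τ₁^[i] P₁) = ⊤)
    (hg : ∀ i : Fin n, g (τ₁^[i] P₁) = τ₂^[i] P₂)
    (h₁ : τ₁^[n] P₁ = c • P₁) (h₂ : τ₂^[n] P₂ = c • P₂) :
    Function.Semiconj g τ₁ τ₂ := by
  have hsucc : ∀ i : Fin n, g (τ₁^[i + 1] P₁) = τ₂^[i + 1] P₂ := fun i => by
    by_cases hi : (i : ℕ) + 1 < n
    · exact hg ⟨_, hi⟩
    · rw [show (i : ℕ) + 1 = n by omega, h₁, h₂, map_smul]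
      exact congrArg (c • ·) (hg ⟨0, i.pos⟩)
  have hcomp : g.comp τ₁ = τ₂.comp g := LinearMap.ext_on_range hspan fun i => by
    rw [LinearMap.comp_apply, LinearMap.comp_apply, hg i, ← Function.iterate_succ_apply' τ₁,
      hsucc, Function.iterate_succ_apply']
  exact fun v => LinearMap.congr_fun hcomp v

theorem ker_parityCheck_eq_iff (hn : 0 < n) (h₁ : τ₁^[n] P₁ = c • P₁)
    (h₂ : τ₂^[n] P₂ = c • P₂) (hs₁ : Function.Surjective (parityCheck K τ₁ P₁ n))
    (hs₂ : Function.Surjective (parityCheck K τ₂ P₂ n)) :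
    LinearMap.ker (parityCheck K τ₁ P₁ n) = LinearMap.ker (parityCheck K τ₂ P₂ n) ↔
      ∃ g : V ≃ₗ[K] W, g P₁ = P₂ ∧ Function.Semiconj g τ₁ τ₂ := by
  constructor
  · intro hker
    obtain ⟨g, hg⟩ := exists_linearEquiv_comp_eq_of_ker_eq hs₁ hs₂ hker
    have horbit : ∀ i : Fin n, g (τ₁^[i] P₁) = τ₂^[i] P₂ := fun i => by
      simpa using LinearMap.congr_fun hg (Pi.single i 1)
    have hspan : Submodule.span K (Set.range fun i : Fin n => τ₁^[i] P₁) = ⊤ :=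
      (span_range_eq_top_iff_surjective_fintypeLinearCombination K _).2 hs₁
    exact ⟨g, horbit ⟨0, hn⟩, semiconj_of_map_iterate_eq g.toLinearMap hspan horbit h₁ h₂⟩
  · rintro ⟨g, hP, hg⟩
    rw [← g.ker_comp, LinearMap.comp_parityCheck n g.toLinearMap hP hg]

end Semilinear

section Matrix

variable {R ι : Type*} [CommRing R] [Fintype ι] [DecidableEq ι]

theorem Matrix.exists_linearEquiv_iff_exists_isUnit (Q : ((ι → R) → ι → R) → Prop) :
    (∃ g : (ι → R) ≃ₗ[R] ι → R, Q g) ↔ ∃ S : Matrix ι ι R, IsUnit S ∧ Q S.vecMul := by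
  constructor
  · rintro ⟨g, hg⟩
    have hgS : ⇑g = (LinearMap.toMatrix' g.toLinearMap).transpose.vecMul := by
      funext v
      simp [Matrix.vecMul_transpose, LinearMap.toMatrix'_mulVec]
    exact ⟨_, Matrix.vecMul_surjective_iff_isUnit.1 (hgS ▸ g.surjective), hgS ▸ hg⟩
  · rintro ⟨S, hS, hQ⟩
    exact ⟨.ofBijective S.vecMulLinear
      ⟨Matrix.vecMul_injective_of_isUnit hS, Matrix.vecMul_surjective_iff_isUnit.2 hS⟩, hQ⟩

theorem Matrix.semiconj_vecMul_iff {S : Matrix ι ι R} (hS : IsUnit S)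
    {f₁ f₂ : (ι → R) → ι → R} :
    Function.Semiconj S.vecMul f₁ f₂ ↔ ∀ v, f₂ v = vecMul (f₁ (vecMul v S⁻¹)) S := by
  have hdet := (Matrix.isUnit_iff_isUnit_det S).1 hS
  have hinv₁ : ∀ v, vecMul (vecMul v S⁻¹) S = v := fun v => by
    rw [Matrix.vecMul_vecMul, Matrix.nonsing_inv_mul _ hdet, Matrix.vecMul_one]
  have hinv₂ : ∀ v, vecMul (vecMul v S) S⁻¹ = v := fun v => by
    rw [Matrix.vecMul_vecMul, Matrix.mul_nonsing_inv _ hdet, Matrix.vecMul_one]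
  refine ⟨fun h v => ?_, fun h v => ?_⟩
  · simpa only [hinv₁] using (h (vecMul v S⁻¹)).symm
  · simpa only [hinv₂] using (h (vecMul v S)).symm

end Matrix

theorem stmt_8_general {n k : ℕ} (hk : 1 ≤ k) (hkn : k ≤ n)
    {F : Type*} [Field F]
    (θ : F ≃+* F) (α : F)
    (P₁ P₂ : Fin k → F) (T₁ T₂ : Matrix (Fin k) (Fin k) F)
    (hP₁ : (tauMap θ T₁)^[n] P₁ = α • P₁)
    (hP₂ : (tauMap θ T₂)^[n] P₂ = α • P₂)
    (C₁ C₂ : Submodule F (Fin n → F))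
    (hC₁ : (C₁ : Set (Fin n → F)) =
      {c : Fin n → F | ∑ i : Fin n, c i • (tauMap θ T₁)^[(i : ℕ)] P₁ = 0})
    (hC₂ : (C₂ : Set (Fin n → F)) =
      {c : Fin n → F | ∑ i : Fin n, c i • (tauMap θ T₂)^[(i : ℕ)] P₂ = 0})
    (hd₁ : Module.finrank F C₁ = n - k)
    (hd₂ : Module.finrank F C₂ = n - k) :
    C₁ = C₂ ↔ ∃ S : Matrix (Fin k) (Fin k) F, IsUnit S ∧
      Matrix.vecMul P₁ S = P₂ ∧
      ∀ v : Fin k → F,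
        tauMap θ T₂ v = Matrix.vecMul (tauMap θ T₁ (Matrix.vecMul v S⁻¹)) S := by
  obtain rfl : C₁ = LinearMap.ker (parityCheck F (tauSemilinear θ T₁) P₁ n) :=
    SetLike.coe_injective hC₁
  obtain rfl : C₂ = LinearMap.ker (parityCheck F (tauSemilinear θ T₂) P₂ n) :=
    SetLike.coe_injective hC₂
  have hdim : finrank F (Fin k → F) ≤ finrank F (Fin n → F) := by simpa using hkn
  rw [ker_parityCheck_eq_iff (by omega) hP₁ hP₂
    (LinearMap.surjective_of_finrank_ker_eq _ hdim (by simpa using hd₁))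
    (LinearMap.surjective_of_finrank_ker_eq _ hdim (by simpa using hd₂))]
  refine (Matrix.exists_linearEquiv_iff_exists_isUnit fun g =>
    g P₁ = P₂ ∧ Function.Semiconj g (tauMap θ T₁) (tauMap θ T₂)).trans ?_
  exact exists_congr fun S => and_congr_right fun hS =>
    and_congr_right' (Matrix.semiconj_vecMul_iff hS)

/-- two skew `(α,θ)`-cyclic `[n, n-k]`-codes defined by
`(τ₁, P₁, n)` and `(τ₂, P₂, n)` coincide iff there is `S ∈ GL(k,q)` with
`P₁·S = P₂` and `τ₂(v) = τ₁(v·S⁻¹)·S` for all `v` (i.e. `τ₁ = S·τ₂·S⁻¹`). -/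
theorem stmt_8 {n k : ℕ} (hk : 1 ≤ k) (hkn : k ≤ n)
    {F : Type*} [Field F] [Fintype F]
    (θ : F ≃+* F) (α : F) (hα : α ≠ 0)
    (P₁ P₂ : Fin k → F) (T₁ T₂ : Matrix (Fin k) (Fin k) F)
    (hT₁ : IsUnit T₁) (hT₂ : IsUnit T₂)
    (hP₁ : (tauMap θ T₁)^[n] P₁ = α • P₁)
    (hP₂ : (tauMap θ T₂)^[n] P₂ = α • P₂)
    (C₁ C₂ : Submodule F (Fin n → F))
    (hC₁ : (C₁ : Set (Fin n → F)) =
      {c : Fin n → F | ∑ i : Fin n, c i • (tauMap θ T₁)^[(i : ℕ)] P₁ = 0})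
    (hC₂ : (C₂ : Set (Fin n → F)) =
      {c : Fin n → F | ∑ i : Fin n, c i • (tauMap θ T₂)^[(i : ℕ)] P₂ = 0})
    (hd₁ : Module.finrank F C₁ = n - k)
    (hd₂ : Module.finrank F C₂ = n - k) :
    C₁ = C₂ ↔ ∃ S : Matrix (Fin k) (Fin k) F, IsUnit S ∧
      Matrix.vecMul P₁ S = P₂ ∧
      ∀ v : Fin k → F,
        tauMap θ T₂ v = Matrix.vecMul (tauMap θ T₁ (Matrix.vecMul v S⁻¹)) S :=
  stmt_8_general hk hkn θ α P₁ P₂ T₁ T₂ hP₁ hP₂ C₁ C₂ hC₁ hC₂ hd₁ hd₂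
end

section
/- Let p be a prime, q = p^r with r ≥ 2, and let θ be the automorphism of 𝔽_q given by θ(a) = a^{p^s} with 1 ≤ s ≤ r−1. Let g_0, ..., g_k ∈ 𝔽_q with g_k ≠ 0, k ≥ 1, n > k, and let C ⊆ 𝔽_q^n be the θ-module code generated by g(t) = ∑_{i=0}^{k} g_i t^i in 𝔽_q[t;θ]. Assume q^{[k]_s} − 1 ≥ [n]_s (equivalently, k ≥ log_{p^s}[1 + ((p^s − 1)/r)·log_p(((p^s)^n + p^s − 2)/(p^s − 1))]). Let E be a field extension of 𝔽_q with |E| = q^{[k]_s} and let ω be a generator of the cyclic group E*. Suppose there exist integers l ≥ 0, Δ ≥ 2, and c with gcd(c, q^{[k]_s} − 1) = 1 such that the [p^s]-polynomial g^{[]_s}(X) = ∑_{i=0}^{k} g_i·X^{[i]_s}, viewed in E[X], satisfies g^{[]_s}(ω^{l+ci}) = 0 for all i = 0, 1, ..., Δ−2. Then every nonzero codeword of C has Hamming weight at least Δ, i.e., d(C) ≥ Δ. -/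
/-- `br p s i = [i]_s = 1 + p^s + p^{2s} + ⋯ + p^{(i-1)s} = ((p^s)^i - 1)/(p^s - 1)`. -/
def br (p s i : ℕ) : ℕ := ∑ j ∈ Finset.range i, (p ^ s) ^ j

/-- `genVec n θ a j` is the coefficient vector of `t^j · a(t)` in `𝔽_q[t;θ]`:
it has entry `θ^j(a_i)` in position `i + j` and `0` in positions `< j`. -/
def genVec (n : ℕ) {F : Type*} [Field F] (θ : F ≃+* F) (a : ℕ → F) (j : ℕ) :
    Fin n → F :=
  fun idx => if j ≤ idx.val then (⇑θ)^[j] (a (idx.val - j)) else 0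

/-!
A codeword `v = ∑ a_j t^j g` of the θ-module code becomes, under `t^j ↦ X^{[j]_s}`, the
`[p^s]`-polynomial `v^{[]_s}(X) = ∑ v_i X^{[i]_s}`. Since `[j + i]_s = [j]_s + p^{sj} [i]_s` and
`θ^j` is the `p^{sj}`-th power Frobenius, `(t^j g)^{[]_s}(β) = β^{[j]_s} · g^{[]_s}(β)^{p^{sj}}`, so every
root of `g^{[]_s}` is a root of `v^{[]_s}`. Writing `β = ω^{l + c i}`, the vanishing of
`v^{[]_s}(ω^{l+ci})` for `i < Δ - 1` says that the vector `(v_m ω^{l [m]_s})_m` is annihilated by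
the first `Δ - 1` rows of the Vandermonde matrix on the nodes `ω^{c [m]_s}`. These nodes are
distinct because `c` is a unit modulo `ord ω = q^{[k]_s} - 1` and `[m]_s < [n]_s ≤ ord ω`, so a
nonzero such vector has more than `Δ - 1` nonzero entries.
-/

open Finset Function

lemma br_add (p s j i : ℕ) : br p s (j + i) = br p s j + p ^ (s * j) * br p s i := by
  induction i with
  | zero => simp [br]
  | succ i ih =>
    rw [← Nat.add_assoc]
    unfold br at *
    rw [sum_range_succ, ih, sum_range_succ, Nat.mul_add, ← Nat.add_assoc, pow_add, ← pow_mul]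

lemma br_strictMono {p : ℕ} (hp : 0 < p) (s : ℕ) : StrictMono (br p s) :=
  strictMono_nat_of_lt_succ fun i => by
    unfold br
    rw [sum_range_succ]
    exact Nat.lt_add_of_pos_right (pow_pos (pow_pos hp s) i)

lemma iterate_apply_eq_pow {M : Type*} [Monoid M] {f : M → M} {m : ℕ}
    (hf : ∀ a, f a = a ^ m) (j : ℕ) (a : M) : f^[j] a = a ^ m ^ j := by
  induction j with
  | zero => simp
  | succ j ih => rw [iterate_succ_apply', hf, ih, ← pow_mul, pow_succ]

lemma lt_hammingNorm_of_sum_mul_pow_eq_zero {ι K : Type*} [Fintype ι] [CommRing K] [IsDomain K]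
    [DecidableEq K]
    {x y : ι → K} {m : ℕ} (hx : Injective x) (hy : y ≠ 0)
    (h : ∀ j < m, ∑ i, y i * x i ^ j = 0) : m < hammingNorm y := by
  by_contra! hm
  set T : Finset ι := {i | y i ≠ 0}
  let e : Fin #T ≃ T := T.equivFin.symm
  -- on the support the Vandermonde system is square, hence invertible
  have hT : y ∘ (↑) ∘ e = 0 := by
    refine Matrix.eq_zero_of_forall_pow_sum_mul_pow_eq_zero (f := x ∘ (↑) ∘ e)
      (hx.comp (Subtype.val_injective.comp e.injective)) fun j => ?_
    have hsum : ∑ i ∈ T, y i * x i ^ (j : ℕ) = ∑ i, y i * x i ^ (j : ℕ) :=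
      sum_subset (subset_univ T) fun i _ hi => by simp_all [T]
    rw [← h j (j.isLt.trans_le hm), ← hsum, ← sum_coe_sort T]
    exact e.sum_comp fun i : T => y i * x i ^ (j : ℕ)
  obtain ⟨i, hi⟩ : T.Nonempty := card_pos.mp (hammingNorm_pos_iff.mpr hy)
  exact (mem_filter.mp hi).2 (by simpa using congr_fun hT (e.symm ⟨i, hi⟩))

lemma pow_mul_injective_of_coprime {G ι : Type*} [Group G] {ω : G} {c : ℕ}
    (hc : c.Coprime (orderOf ω)) {e : ι → ℕ} (he : Injective e)
    (hlt : ∀ i, e i < orderOf ω) : Injective fun i => ω ^ (c * e i) := fun i j hij =>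
  he <| (Nat.ModEq.cancel_left_of_coprime (Nat.coprime_comm.mp hc)
    (pow_eq_pow_iff_modEq.mp hij)).eq_of_lt_of_lt (hlt i) (hlt j)

section BracketEvaluation

variable {F E : Type*} [Field F] [Field E] [Algebra F E]

/-- `brEval p s n β v = v^{[]_s}(β)`. -/
def brEval (p s n : ℕ) (β : E) : (Fin n → F) →ₗ[F] E where
  toFun v := ∑ i, algebraMap F E (v i) * β ^ br p s i
  map_add' v w := by simp only [Pi.add_apply, map_add, add_mul, sum_add_distrib]
  map_smul' a v := by
    simp only [Pi.smul_apply, smul_eq_mul, map_mul, mul_sum, RingHom.id_apply,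
      Algebra.smul_def, mul_assoc]

variable {p s : ℕ} [ExpChar E p] {θ : F ≃+* F} (hθ : ∀ a : F, θ a = a ^ p ^ s)
  {g : ℕ → F} {k : ℕ} (hgtop : ∀ i, k < i → g i = 0)
include hθ hgtop

lemma brEval_genVec {n j : ℕ} (hj : j + k < n) (β : E) :
    brEval p s n β (genVec n θ g j) = β ^ br p s j *
      (∑ i ∈ range (k + 1), algebraMap F E (g i) * β ^ br p s i) ^ p ^ (s * j) := by
  have hθj : ∀ b, algebraMap F E ((⇑θ)^[j] b) = algebraMap F E b ^ p ^ (s * j) := fun b => by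
    rw [iterate_apply_eq_pow hθ, map_pow, ← pow_mul]
  have hshift : brEval p s n β (genVec n θ g j)
      = ∑ i ∈ range (n - j), algebraMap F E ((⇑θ)^[j] (g i)) * β ^ br p s (j + i) := by
    simp only [brEval, LinearMap.coe_mk, AddHom.coe_mk, genVec, apply_ite (algebraMap F E),
      map_zero, ite_mul, zero_mul]
    rw [Fin.sum_univ_eq_sum_range (fun m => if j ≤ m then
      algebraMap F E ((⇑θ)^[j] (g (m - j))) * β ^ br p s m else 0), ← sum_filter,
      show {m ∈ range n | j ≤ m} = Ico j n by ext; simp [and_comm], sum_Ico_eq_sum_range]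
    simp only [Nat.add_sub_cancel_left]
  have htrunc : ∑ i ∈ range (n - j), algebraMap F E (g i) * β ^ br p s i
      = ∑ i ∈ range (k + 1), algebraMap F E (g i) * β ^ br p s i :=
    (sum_subset (range_subset_range.mpr (by omega)) fun i _ hi => by
      simp [hgtop i (by simpa using hi)]).symm
  rw [hshift, ← htrunc, sum_pow_char_pow, mul_sum]
  refine sum_congr rfl fun i _ => ?_
  rw [hθj, br_add, pow_add, mul_pow, ← pow_mul, mul_comm (br p s i)]
  ring

lemma brEval_eq_zero_of_mem_span {n : ℕ} {β : E}
    (hβ : ∑ i ∈ range (k + 1), algebraMap F E (g i) * β ^ br p s i = 0) {v : Fin n → F}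
    (hv : v ∈ Submodule.span F {u : Fin n → F | ∃ j < n - k, u = genVec n θ g j}) :
    brEval p s n β v = 0 := by
  refine (Submodule.span_le.mpr ?_ : _ ≤ LinearMap.ker (brEval p s n β)) hv
  rintro u ⟨j, hj, rfl⟩
  rw [SetLike.mem_coe, LinearMap.mem_ker, brEval_genVec hθ hgtop (by omega), hβ,
    zero_pow (pow_ne_zero _ (expChar_pos E p).ne'), mul_zero]

end BracketEvaluation

theorem stmt_13_general {p r s : ℕ} (hp : p.Prime)
    {F : Type*} [Field F] [Fintype F] [DecidableEq F]
    (hF : Fintype.card F = p ^ r)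
    (θ : F ≃+* F) (hθ : ∀ a : F, θ a = a ^ p ^ s)
    (g : ℕ → F) (k n : ℕ) (hgtop : ∀ i, k < i → g i = 0)
    (hbound : br p s n ≤ (p ^ r) ^ br p s k - 1)
    {E : Type*} [Field E] [Fintype E] [Algebra F E]
    (hE : Fintype.card E = (p ^ r) ^ br p s k)
    (ω : Eˣ) (hω : ∀ u : Eˣ, u ∈ Subgroup.zpowers ω)
    (l Δ c : ℕ)
    (hc : Nat.gcd c ((p ^ r) ^ br p s k - 1) = 1)
    (hroots : ∀ i < Δ - 1,
      Polynomial.aeval ((ω : E) ^ (l + c * i))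
        (∑ i' ∈ Finset.range (k + 1),
          Polynomial.C (g i') * Polynomial.X ^ br p s i') = 0)
    (v : Fin n → F)
    (hv : v ∈ Submodule.span F {u : Fin n → F | ∃ j < n - k, u = genVec n θ g j})
    (hv0 : v ≠ 0) :
    Δ ≤ hammingNorm v := by
  classical
  have : Fact p.Prime := ⟨hp⟩
  have : CharP F p := charP_of_card_eq_prime_pow hF
  have : CharP E p := charP_of_injective_algebraMap (algebraMap F E).injective p
  have horder : orderOf ω = (p ^ r) ^ br p s k - 1 := by
    rw [orderOf_eq_card_of_forall_mem_zpowers hω, Nat.card_units, Nat.card_eq_fintype_card, hE]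
  have hnodes : Injective fun i : Fin n => ((ω ^ (c * br p s i) : Eˣ) : E) :=
    Units.val_injective.comp <| pow_mul_injective_of_coprime (horder ▸ hc)
      ((br_strictMono hp.pos s).injective.comp Fin.val_injective)
      fun i => horder ▸ (br_strictMono hp.pos s i.isLt).trans_le hbound
  let y : Fin n → E := fun i => algebraMap F E (v i) * (ω : E) ^ (l * br p s i)
  have hy : hammingNorm y = hammingNorm v :=
    hammingNorm_comp (fun (i : Fin n) a => algebraMap F E a * (ω : E) ^ (l * br p s i))
      (fun i => (mul_left_injective₀ (by simp)).comp (algebraMap F E).injective) (by simp)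
  have hvanish : ∀ j < Δ - 1, ∑ i, y i * ((ω ^ (c * br p s i) : Eˣ) : E) ^ j = 0 := by
    intro j hj
    have hβ := hroots j hj
    simp only [map_sum, map_mul, Polynomial.aeval_C, Polynomial.aeval_X_pow] at hβ
    rw [← brEval_eq_zero_of_mem_span hθ hgtop hβ hv]
    refine sum_congr rfl fun i _ => ?_
    simp only [y, Units.val_pow_eq_pow_val]
    ring
  have hweight := lt_hammingNorm_of_sum_mul_pow_eq_zero hnodes
    (by simpa [← hammingNorm_pos_iff, hy] using hv0) hvanish
  omega

/-- lower bound on the distance: let `C ⊆ 𝔽_q^n` be the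
θ-module code generated by `g(t)` of degree `k`, with `q = p^r`,
`θ(a) = a^{p^s}` and `q^{[k]_s} - 1 ≥ [n]_s`. If `ω` generates `E*` with
`|E| = q^{[k]_s}`, `gcd(c, q^{[k]_s} - 1) = 1`, and the `[p^s]`-polynomial
`g^{[]ₛ}` vanishes at `ω^{l+ci}` for `i = 0, …, Δ-2`, then every nonzero
codeword of `C` has Hamming weight at least `Δ`. -/
theorem stmt_13 {p r s : ℕ} (hp : p.Prime) (hr : 2 ≤ r) (hs1 : 1 ≤ s)
    (hs2 : s ≤ r - 1)
    {F : Type*} [Field F] [Fintype F] [DecidableEq F]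
    (hF : Fintype.card F = p ^ r)
    (θ : F ≃+* F) (hθ : ∀ a : F, θ a = a ^ p ^ s)
    (g : ℕ → F) (k n : ℕ) (hk : 1 ≤ k) (hkn : k < n)
    (hgk : g k ≠ 0) (hgtop : ∀ i, k < i → g i = 0)
    (hbound : br p s n ≤ (p ^ r) ^ br p s k - 1)
    {E : Type*} [Field E] [Fintype E] [Algebra F E]
    (hE : Fintype.card E = (p ^ r) ^ br p s k)
    (ω : Eˣ) (hω : ∀ u : Eˣ, u ∈ Subgroup.zpowers ω)
    (l Δ c : ℕ) (hΔ : 2 ≤ Δ)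
    (hc : Nat.gcd c ((p ^ r) ^ br p s k - 1) = 1)
    (hroots : ∀ i < Δ - 1,
      Polynomial.aeval ((ω : E) ^ (l + c * i))
        (∑ i' ∈ Finset.range (k + 1),
          Polynomial.C (g i') * Polynomial.X ^ br p s i') = 0)
    (v : Fin n → F)
    (hv : v ∈ Submodule.span F {u : Fin n → F | ∃ j < n - k, u = genVec n θ g j})
    (hv0 : v ≠ 0) :
    Δ ≤ hammingNorm v :=
  stmt_13_general hp hF θ hθ g k n hgtop hbound hE ω hω l Δ c hc hroots v hv hv0
end
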